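/- arXiv:gr-qc/9905019 — 3 statements merged into one kernel-verified Lean document; each statement's English description precedes it below -/
import Mathlib

section
/- For half-integers j₁, j₂ ≥ 0 and j with |j₁ − j₂| ≤ j ≤ j₁ + j₂, the eigenvalue of the normalized scalar product operator, cos θ = [j(j+1) − j₁(j₁+1) − j₂(j₂+1)] / (2√(j₁(j₁+1)) √(j₂(j₂+1))), lies in the closed interval [−1, 1], so the angle θ = arccos(cos θ) is well-defined. -/
lemma nspe_key (j₁ j₂ j : ℝ) (h1 : 0 < j₁) (h2 : 0 < j₂) (h12 : j₂ ≤ j₁)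
    (ht1 : j₁ - j₂ ≤ j) (ht2 : j ≤ j₁ + j₂) :
    |j * (j + 1) - j₁ * (j₁ + 1) - j₂ * (j₂ + 1)| ≤
      2 * Real.sqrt (j₁ * (j₁ + 1)) * Real.sqrt (j₂ * (j₂ + 1)) := by
  have hjnn : 0 ≤ j := le_trans (by linarith) ht1
  set s1 := Real.sqrt (j₁ * (j₁ + 1)) with hs1def
  set s2 := Real.sqrt (j₂ * (j₂ + 1)) with hs2def
  have hA : 0 ≤ j₁ * (j₁ + 1) := by nlinarith
  have hB : 0 ≤ j₂ * (j₂ + 1) := by nlinarith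
  have hs1 : s1 ^ 2 = j₁ * (j₁ + 1) := Real.sq_sqrt hA
  have hs2 : s2 ^ 2 = j₂ * (j₂ + 1) := Real.sq_sqrt hB
  have hs1n : 0 ≤ s1 := Real.sqrt_nonneg _
  have hs2n : 0 ≤ s2 := Real.sqrt_nonneg _
  have h1s : j₁ ≤ s1 := Real.le_sqrt_of_sq_le (by nlinarith)
  have h2s : j₂ ≤ s2 := Real.le_sqrt_of_sq_le (by nlinarith)
  have hmul : s1 * s2 = Real.sqrt (j₁ * (j₁ + 1) * (j₂ * (j₂ + 1))) :=
    (Real.sqrt_mul hA _).symm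
  have hlow : j₂ * (j₁ + 1) ≤ s1 * s2 := by
    rw [hmul]
    exact Real.le_sqrt_of_sq_le (by nlinarith [mul_nonneg (mul_nonneg h2.le
      (by linarith : (0:ℝ) ≤ j₁ + 1)) (by linarith : (0:ℝ) ≤ j₁ - j₂)])
  rw [abs_le]
  constructor
  · nlinarith
  · nlinarith [mul_le_mul h1s h2s h2.le hs1n]

theorem normalized_scalar_product_eigenvalue_mem_Icc
    (j₁ j₂ j : ℝ)
    (hj₁ : ∃ n : ℕ, j₁ = n / 2) (hj₂ : ∃ n : ℕ, j₂ = n / 2) (hj : ∃ n : ℕ, j = n / 2)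
    (hj₁pos : 0 < j₁) (hj₂pos : 0 < j₂)
    (htri₁ : |j₁ - j₂| ≤ j) (htri₂ : j ≤ j₁ + j₂)
    (hint : ∃ m : ℤ, j₁ + j₂ + j = (m : ℝ)) :
    (j * (j + 1) - j₁ * (j₁ + 1) - j₂ * (j₂ + 1)) /
        (2 * Real.sqrt (j₁ * (j₁ + 1)) * Real.sqrt (j₂ * (j₂ + 1))) ∈
      Set.Icc (-1 : ℝ) 1 := by
  have hs1p : 0 < Real.sqrt (j₁ * (j₁ + 1)) := Real.sqrt_pos.mpr (by nlinarith)
  have hs2p : 0 < Real.sqrt (j₂ * (j₂ + 1)) := Real.sqrt_pos.mpr (by nlinarith)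
  have hDpos : 0 < 2 * Real.sqrt (j₁ * (j₁ + 1)) * Real.sqrt (j₂ * (j₂ + 1)) := by positivity
  have hkey : |j * (j + 1) - j₁ * (j₁ + 1) - j₂ * (j₂ + 1)| ≤
      2 * Real.sqrt (j₁ * (j₁ + 1)) * Real.sqrt (j₂ * (j₂ + 1)) := by
    rcases le_total j₂ j₁ with h12 | h12
    · exact nspe_key j₁ j₂ j hj₁pos hj₂pos h12 (le_trans (le_abs_self _) htri₁) htri₂
    · have := nspe_key j₂ j₁ j hj₂pos hj₁pos h12
        (le_trans (le_abs_self (j₂ - j₁)) (by rwa [abs_sub_comm] at htri₁)) (by linarith)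
      calc |j * (j + 1) - j₁ * (j₁ + 1) - j₂ * (j₂ + 1)|
          = |j * (j + 1) - j₂ * (j₂ + 1) - j₁ * (j₁ + 1)| := by
            congr 1; ring
        _ ≤ 2 * Real.sqrt (j₂ * (j₂ + 1)) * Real.sqrt (j₁ * (j₁ + 1)) := this
        _ = 2 * Real.sqrt (j₁ * (j₁ + 1)) * Real.sqrt (j₂ * (j₂ + 1)) := by ring
  constructor
  · rw [le_div_iff₀ hDpos]
    have := (abs_le.mp hkey).1
    linarith
  · rw [div_le_iff₀ hDpos]
    have := (abs_le.mp hkey).2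
    linarith
end

section
/- The set of normalized scalar product eigenvalues {[j(j+1) − j₁(j₁+1) − j₂(j₂+1)]/(2√(j₁(j₁+1)) √(j₂(j₂+1))) : j₁, j₂, j half-integers with triangle inequality |j₁−j₂| ≤ j ≤ j₁+j₂, j₁,j₂ > 0} is dense in the interval [−1, 1]. -/
theorem normalized_scalar_product_eigenvalues_dense :
    Set.Icc (-1 : ℝ) 1 ⊆
      closure {x : ℝ | ∃ j₁ j₂ j : ℝ,
        (∃ n : ℕ, j₁ = n / 2) ∧ (∃ n : ℕ, j₂ = n / 2) ∧ (∃ n : ℕ, j = n / 2) ∧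
        0 < j₁ ∧ 0 < j₂ ∧ |j₁ - j₂| ≤ j ∧ j ≤ j₁ + j₂ ∧ (∃ m : ℤ, j₁ + j₂ + j = (m : ℝ)) ∧
        x = (j * (j + 1) - j₁ * (j₁ + 1) - j₂ * (j₂ + 1)) /
              (2 * Real.sqrt (j₁ * (j₁ + 1)) * Real.sqrt (j₂ * (j₂ + 1)))} := by
  intro t ht
  obtain ⟨ht1, ht2⟩ := ht
  rw [Metric.mem_closure_iff]
  intro ε hε
  obtain ⟨N, hN⟩ := exists_nat_one_div_lt hε
  set M : ℕ := N + 1 with hM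
  have hM1 : (1 : ℝ) ≤ (M : ℝ) := by exact_mod_cast Nat.one_le_iff_ne_zero.mpr (by simp [hM])
  have hMpos : (0 : ℝ) < (M : ℝ) := by linarith
  set a : ℝ := (M : ℝ) * ((M : ℝ) + 1) with ha
  have ha_pos : 0 < a := by positivity
  set c : ℝ := (t + 1) * (2 * a) with hc
  have hc0 : 0 ≤ c := by
    have : 0 ≤ t + 1 := by linarith
    positivity
  have hc2 : c ≤ 4 * a := by
    have : t + 1 ≤ 2 := by linarith
    nlinarith
  set k : ℕ := Nat.floor (Real.sqrt c) with hk
  set j : ℕ := min (2 * M) k with hj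
  have hj2M : j ≤ 2 * M := min_le_left _ _
  have hj2M' : (j : ℝ) ≤ 2 * (M : ℝ) := by exact_mod_cast hj2M
  -- key bound
  have key : |(j : ℝ) * ((j : ℝ) + 1) - c| ≤ 2 * (M : ℝ) + 1 := by
    have hfloor_le : (k : ℝ) ≤ Real.sqrt c := Nat.floor_le (Real.sqrt_nonneg c)
    have hsq : Real.sqrt c * Real.sqrt c = c := Real.mul_self_sqrt hc0
    rcases le_or_gt k (2 * M) with h | h
    · have hjk : j = k := min_eq_right h
      have h1 : (j : ℝ) * (j : ℝ) ≤ c := by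
        rw [hjk]
        calc (k : ℝ) * (k : ℝ) ≤ Real.sqrt c * Real.sqrt c :=
              mul_self_le_mul_self (by positivity) hfloor_le
          _ = c := hsq
      have h2 : c < ((j : ℝ) + 1) * ((j : ℝ) + 1) := by
        rw [hjk]
        have hlt : Real.sqrt c < (k : ℝ) + 1 := Nat.lt_floor_add_one _
        calc c = Real.sqrt c * Real.sqrt c := hsq.symm
          _ < ((k : ℝ) + 1) * ((k : ℝ) + 1) :=
              mul_self_lt_mul_self (Real.sqrt_nonneg c) hlt
      rw [abs_le]
      constructor <;> nlinarith
    · have hjk : j = 2 * M := min_eq_left h.le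
      have hk1 : (2 * (M : ℝ) + 1) ≤ (k : ℝ) := by
        have : 2 * M + 1 ≤ k := h
        exact_mod_cast this
      have h1 : (2 * (M : ℝ) + 1) * (2 * (M : ℝ) + 1) ≤ c := by
        calc (2 * (M : ℝ) + 1) * (2 * (M : ℝ) + 1)
            ≤ (k : ℝ) * (k : ℝ) := mul_self_le_mul_self (by positivity) hk1
          _ ≤ Real.sqrt c * Real.sqrt c := mul_self_le_mul_self (by positivity) hfloor_le
          _ = c := hsq
      have hjr : (j : ℝ) = 2 * (M : ℝ) := by rw [hjk]; push_cast; ring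
      rw [abs_le, hjr]
      constructor <;> nlinarith
  -- the candidate point
  refine ⟨((j : ℝ) * ((j : ℝ) + 1) - 2 * a) / (2 * a), ?_, ?_⟩
  · refine ⟨(M : ℝ), (M : ℝ), (j : ℝ), ⟨2 * M, by push_cast; ring⟩,
      ⟨2 * M, by push_cast; ring⟩, ⟨2 * j, by push_cast; ring⟩,
      hMpos, hMpos, by simp, by linarith, ⟨2 * M + j, by push_cast; ring⟩, ?_⟩
    have haM : (M : ℝ) * ((M : ℝ) + 1) = a := ha.symm
    rw [haM, mul_assoc, Real.mul_self_sqrt ha_pos.le]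
    ring
  · rw [Real.dist_eq]
    have hD : (0 : ℝ) < 2 * a := by positivity
    have heq : t - ((j : ℝ) * ((j : ℝ) + 1) - 2 * a) / (2 * a)
        = (c - (j : ℝ) * ((j : ℝ) + 1)) / (2 * a) := by
      field_simp [hc]
      ring
    rw [heq, abs_div, abs_of_pos hD]
    have habs : |c - (j : ℝ) * ((j : ℝ) + 1)| ≤ 2 * (M : ℝ) + 1 := by
      rw [abs_sub_comm]; exact key
    have h1M : (2 * (M : ℝ) + 1) / (2 * a) < 1 / (M : ℝ) := by
      rw [div_lt_div_iff₀ hD hMpos, ha]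
      nlinarith
    have hlast : (1 : ℝ) / (M : ℝ) < ε := by
      have : ((N : ℝ) + 1) = (M : ℝ) := by push_cast [hM]; ring
      rwa [this] at hN
    calc |c - (j : ℝ) * ((j : ℝ) + 1)| / (2 * a)
        ≤ (2 * (M : ℝ) + 1) / (2 * a) := by
          gcongr
      _ < 1 / (M : ℝ) := h1M
      _ < ε := hlast
end

section
/- Let A, B be self-adjoint operators on a finite-dimensional Hilbert space and ψ a unit vector. Then ΔA · ΔB ≥ (1/2)|⟨ψ, [A,B]ψ⟩|, where ΔA := √(⟨ψ, A²ψ⟩ − ⟨ψ, Aψ⟩²). Consequently, if t₁₂ = (J₁·J₂)/(j₁j₂) and t₂₃ = (J₂·J₃)/(j₂j₃) are normalized scalar product operators for mutually commuting angular momentum triples, then Δt₁₂ · Δt₂₃ ≥ |⟨ψ, J₁·(J₂×J₃)ψ⟩| / (2 j₁ j₂² j₃). -/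
open scoped InnerProductSpace

/-- The Levi-Civita symbol on three indices, valued in `ℂ`. -/
def epsLC (i j k : Fin 3) : ℂ :=
  if (i, j, k) = (0, 1, 2) ∨ (i, j, k) = (1, 2, 0) ∨ (i, j, k) = (2, 0, 1) then 1
  else if (i, j, k) = (0, 2, 1) ∨ (i, j, k) = (2, 1, 0) ∨ (i, j, k) = (1, 0, 2) then -1
  else 0

/-- Root-mean-square uncertainty of an operator `A` in the state `ψ`. -/
noncomputable def uncertainty {V : Type*} [NormedAddCommGroup V] [InnerProductSpace ℂ V]
    (A : Module.End ℂ V) (ψ : V) : ℝ :=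
  Real.sqrt ((⟪ψ, A (A ψ)⟫_ℂ).re - ((⟪ψ, A ψ⟫_ℂ).re) ^ 2)

open scoped ComplexConjugate

/-! Centering at the expectation values, `ΔA = ‖x‖` and `ΔB = ‖y‖` for `x = Aψ - ⟨A⟩ψ` and
`y = Bψ - ⟨B⟩ψ`, while `⟨[A, B]⟩ = ⟪x, y⟫ - conj ⟪x, y⟫`; Cauchy–Schwarz gives Robertson's
inequality. For the angular momenta, commutation of the three triples collapses
`[J₁ᵢJ₂ᵢ, J₂ⱼJ₃ⱼ]` to `J₁ᵢ [J₂ᵢ, J₂ⱼ] J₃ⱼ`, and the `su(2)` relations for `J₂` sum these to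
`-i J₁·(J₂×J₃)`; the factor `1 / (j₁ j₂² j₃)` is the product of the two normalizations. -/

section Robertson

variable {V : Type*} [NormedAddCommGroup V] [InnerProductSpace ℂ V]
  {A B : Module.End ℂ V} {ψ : V}

lemma inner_sub_inner_smul_sub_inner_smul (hA : A.IsSymmetric) (B : Module.End ℂ V)
    (hψ : ‖ψ‖ = 1) :
    ⟪A ψ - ⟪ψ, A ψ⟫_ℂ • ψ, B ψ - ⟪ψ, B ψ⟫_ℂ • ψ⟫_ℂ =
      ⟪A ψ, B ψ⟫_ℂ - ⟪ψ, A ψ⟫_ℂ * ⟪ψ, B ψ⟫_ℂ := by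
  have hψψ : ⟪ψ, ψ⟫_ℂ = 1 := by simp [hψ]
  have hAψψ : ⟪A ψ, ψ⟫_ℂ = ⟪ψ, A ψ⟫_ℂ := hA ψ ψ
  have hreal : conj ⟪ψ, A ψ⟫_ℂ = ⟪ψ, A ψ⟫_ℂ := by rw [inner_conj_symm, hAψψ]
  simp only [inner_sub_left, inner_sub_right, inner_smul_left, inner_smul_right, hψψ, hreal,
    hAψψ]
  ring

lemma uncertainty_eq_norm_sub_inner_smul (hA : A.IsSymmetric) (hψ : ‖ψ‖ = 1) :
    uncertainty A ψ = ‖A ψ - ⟪ψ, A ψ⟫_ℂ • ψ‖ := by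
  rw [uncertainty, norm_eq_sqrt_re_inner (𝕜 := ℂ), inner_sub_inner_smul_sub_inner_smul hA A hψ,
    ← hA ψ (A ψ)]
  have him : (⟪ψ, A ψ⟫_ℂ).im = 0 := hA.im_inner_self_apply ψ
  simp [sq, him]

theorem robertson_uncertainty (hA : A.IsSymmetric) (hB : B.IsSymmetric) (hψ : ‖ψ‖ = 1) :
    (1 / 2) * ‖⟪ψ, (A * B - B * A) ψ⟫_ℂ‖ ≤ uncertainty A ψ * uncertainty B ψ := by
  set x := A ψ - ⟪ψ, A ψ⟫_ℂ • ψ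
  set y := B ψ - ⟪ψ, B ψ⟫_ℂ • ψ
  have hcomm : ⟪ψ, (A * B - B * A) ψ⟫_ℂ = ⟪x, y⟫_ℂ - conj ⟪x, y⟫_ℂ := by
    rw [inner_conj_symm, inner_sub_inner_smul_sub_inner_smul hA B hψ,
      inner_sub_inner_smul_sub_inner_smul hB A hψ, LinearMap.sub_apply, inner_sub_right,
      Module.End.mul_apply, Module.End.mul_apply, ← hA ψ, ← hB ψ]
    ring
  calc (1 / 2) * ‖⟪ψ, (A * B - B * A) ψ⟫_ℂ‖
      ≤ (1 / 2) * (‖⟪x, y⟫_ℂ‖ + ‖conj ⟪x, y⟫_ℂ‖) := by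
        rw [hcomm]; gcongr; exact norm_sub_le _ _
    _ = ‖⟪x, y⟫_ℂ‖ := by rw [Complex.norm_conj]; ring
    _ ≤ ‖x‖ * ‖y‖ := norm_inner_le_norm x y
    _ = uncertainty A ψ * uncertainty B ψ := by
        rw [uncertainty_eq_norm_sub_inner_smul hA hψ, uncertainty_eq_norm_sub_inner_smul hB hψ]

end Robertson

lemma epsLC_swap (i j k : Fin 3) : epsLC i k j = -epsLC i j k := by
  fin_cases i <;> fin_cases j <;> fin_cases k <;> simp [epsLC, Prod.ext_iff]

lemma mul_mul_sub_mul_mul_of_commute {R : Type*} [Ring R] {a b c d : R} (hac : Commute a c)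
    (had : Commute a d) (hbd : Commute b d) :
    a * b * (c * d) - c * d * (a * b) = a * (b * c - c * b) * d := by
  have : c * d * (a * b) = a * (c * b) * d := by
    rw [mul_assoc, ← mul_assoc d, ← had.eq, mul_assoc a, ← hbd.eq, ← mul_assoc, ← mul_assoc,
      ← hac.eq, mul_assoc a, mul_assoc]
  rw [this]
  noncomm_ring

theorem commutator_dot_dot_eq_triple_product {R : Type*} [Ring R] [Algebra ℂ R] (J₁ J₂ J₃ : Fin 3 → R)
    (hJ₂ : ∀ i j, J₂ i * J₂ j - J₂ j * J₂ i = Complex.I • ∑ k, epsLC i j k • J₂ k)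
    (h₁₂ : ∀ i j, Commute (J₁ i) (J₂ j)) (h₁₃ : ∀ i j, Commute (J₁ i) (J₃ j))
    (h₂₃ : ∀ i j, Commute (J₂ i) (J₃ j)) :
    (∑ i, J₁ i * J₂ i) * (∑ i, J₂ i * J₃ i) - (∑ i, J₂ i * J₃ i) * (∑ i, J₁ i * J₂ i) =
      -Complex.I • ∑ k, J₁ k * ∑ i, ∑ j, epsLC k i j • (J₂ i * J₃ j) := by
  rw [Finset.sum_mul_sum, Finset.sum_mul_sum, Finset.sum_comm (γ := Fin 3),
    ← Finset.sum_sub_distrib]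
  simp only [← Finset.sum_sub_distrib,
    mul_mul_sub_mul_mul_of_commute (h₁₂ _ _) (h₁₃ _ _) (h₂₃ _ _), hJ₂]
  simp only [Finset.mul_sum, Finset.sum_mul, mul_smul_comm, smul_mul_assoc, Finset.smul_sum]
  rw [Finset.sum_comm]
  refine Finset.sum_congr rfl fun i _ => Finset.sum_comm.trans <|
    Finset.sum_congr rfl fun j _ => Finset.sum_congr rfl fun k _ => ?_
  rw [epsLC_swap, neg_smul, smul_neg, neg_smul, mul_assoc]

theorem uncertainty_relation_and_scalar_product_bound_general
    {V : Type*} [NormedAddCommGroup V] [InnerProductSpace ℂ V]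
    (A B : Module.End ℂ V) (hA : A.IsSymmetric) (hB : B.IsSymmetric)
    (ψ : V) (hψ : ‖ψ‖ = 1)
    (J₁ J₂ J₃ : Fin 3 → Module.End ℂ V)
    (hJsym : ∀ i, (J₁ i).IsSymmetric ∧ (J₂ i).IsSymmetric ∧ (J₃ i).IsSymmetric)
    (hsu2 : ∀ i j, J₂ i * J₂ j - J₂ j * J₂ i = Complex.I • ∑ k, epsLC i j k • J₂ k)
    (hc12 : ∀ i j, J₁ i * J₂ j = J₂ j * J₁ i)
    (hc13 : ∀ i j, J₁ i * J₃ j = J₃ j * J₁ i)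
    (hc23 : ∀ i j, J₂ i * J₃ j = J₃ j * J₂ i)
    (j₁ j₂ j₃ : ℝ) :
    uncertainty A ψ * uncertainty B ψ ≥
        (1 / 2) * ‖⟪ψ, (A * B - B * A) ψ⟫_ℂ‖ ∧
      uncertainty (((1 / (j₁ * j₂) : ℝ) : ℂ) • ∑ i, J₁ i * J₂ i) ψ *
          uncertainty (((1 / (j₂ * j₃) : ℝ) : ℂ) • ∑ i, J₂ i * J₃ i) ψ ≥
        ‖⟪ψ, ((∑ k, J₁ k * (∑ i, ∑ j, epsLC k i j • (J₂ i * J₃ j))) ψ)⟫_ℂ‖ /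
          (2 * j₁ * j₂ ^ 2 * j₃) := by
  refine ⟨robertson_uncertainty hA hB hψ, ?_⟩
  set c₁ : ℝ := 1 / (j₁ * j₂)
  set c₂ : ℝ := 1 / (j₂ * j₃)
  set S₁₂ := ∑ i, J₁ i * J₂ i
  set S₂₃ := ∑ i, J₂ i * J₃ i
  set C := ∑ k, J₁ k * (∑ i, ∑ j, epsLC k i j • (J₂ i * J₃ j))
  set t₁₂ := (c₁ : ℂ) • S₁₂
  set t₂₃ := (c₂ : ℂ) • S₂₃
  have hS₁₂ : S₁₂.IsSymmetric := LinearMap.isSymmetric_sum _ fun i _ =>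
    (hJsym i).1.mul_of_commute (hJsym i).2.1 (hc12 i i)
  have hS₂₃ : S₂₃.IsSymmetric := LinearMap.isSymmetric_sum _ fun i _ =>
    (hJsym i).2.1.mul_of_commute (hJsym i).2.2 (hc23 i i)
  have hcomm : t₁₂ * t₂₃ - t₂₃ * t₁₂ = ((c₁ * c₂ : ℝ) * -Complex.I : ℂ) • C := by
    rw [smul_mul_smul_comm, smul_mul_smul_comm, mul_comm (c₂ : ℂ), ← smul_sub,
      commutator_dot_dot_eq_triple_product J₁ J₂ J₃ hsu2 hc12 hc13 hc23, smul_smul]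
    push_cast; rfl
  have hC : ‖⟪ψ, ((((c₁ * c₂ : ℝ) * -Complex.I : ℂ) • C) ψ)⟫_ℂ‖ =
      |c₁ * c₂| * ‖⟪ψ, C ψ⟫_ℂ‖ := by
    rw [LinearMap.smul_apply, inner_smul_right, norm_mul, norm_mul, norm_neg, Complex.norm_I,
      Complex.norm_real, Real.norm_eq_abs, mul_one]
  calc ‖⟪ψ, C ψ⟫_ℂ‖ / (2 * j₁ * j₂ ^ 2 * j₃)
      = (1 / 2) * (c₁ * c₂ * ‖⟪ψ, C ψ⟫_ℂ‖) := by
        simp only [c₁, c₂]; field_simp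
    _ ≤ (1 / 2) * ‖⟪ψ, (t₁₂ * t₂₃ - t₂₃ * t₁₂) ψ⟫_ℂ‖ := by
        rw [hcomm, hC]; gcongr; exact le_abs_self _
    _ ≤ _ := robertson_uncertainty (hS₁₂.smul (Complex.conj_ofReal c₁))
        (hS₂₃.smul (Complex.conj_ofReal c₂)) hψ

theorem uncertainty_relation_and_scalar_product_bound
    {V : Type*} [NormedAddCommGroup V] [InnerProductSpace ℂ V] [FiniteDimensional ℂ V]
    (A B : Module.End ℂ V) (hA : A.IsSymmetric) (hB : B.IsSymmetric)
    (ψ : V) (hψ : ‖ψ‖ = 1)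
    (J₁ J₂ J₃ : Fin 3 → Module.End ℂ V)
    (hJsym : ∀ i, (J₁ i).IsSymmetric ∧ (J₂ i).IsSymmetric ∧ (J₃ i).IsSymmetric)
    (hsu1 : ∀ i j, J₁ i * J₁ j - J₁ j * J₁ i = Complex.I • ∑ k, epsLC i j k • J₁ k)
    (hsu2 : ∀ i j, J₂ i * J₂ j - J₂ j * J₂ i = Complex.I • ∑ k, epsLC i j k • J₂ k)
    (hsu3 : ∀ i j, J₃ i * J₃ j - J₃ j * J₃ i = Complex.I • ∑ k, epsLC i j k • J₃ k)
    (hc12 : ∀ i j, J₁ i * J₂ j = J₂ j * J₁ i)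
    (hc13 : ∀ i j, J₁ i * J₃ j = J₃ j * J₁ i)
    (hc23 : ∀ i j, J₂ i * J₃ j = J₃ j * J₂ i)
    (j₁ j₂ j₃ : ℝ) (hj₁ : 0 < j₁) (hj₂ : 0 < j₂) (hj₃ : 0 < j₃)
    (hCas1 : ∑ i, J₁ i * J₁ i = ((j₁ * (j₁ + 1) : ℝ) : ℂ) • (1 : Module.End ℂ V))
    (hCas2 : ∑ i, J₂ i * J₂ i = ((j₂ * (j₂ + 1) : ℝ) : ℂ) • (1 : Module.End ℂ V))
    (hCas3 : ∑ i, J₃ i * J₃ i = ((j₃ * (j₃ + 1) : ℝ) : ℂ) • (1 : Module.End ℂ V)) :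
    uncertainty A ψ * uncertainty B ψ ≥
        (1 / 2) * ‖⟪ψ, (A * B - B * A) ψ⟫_ℂ‖ ∧
      uncertainty (((1 / (j₁ * j₂) : ℝ) : ℂ) • ∑ i, J₁ i * J₂ i) ψ *
          uncertainty (((1 / (j₂ * j₃) : ℝ) : ℂ) • ∑ i, J₂ i * J₃ i) ψ ≥
        ‖⟪ψ, ((∑ k, J₁ k * (∑ i, ∑ j, epsLC k i j • (J₂ i * J₃ j))) ψ)⟫_ℂ‖ /
          (2 * j₁ * j₂ ^ 2 * j₃) :=
  uncertainty_relation_and_scalar_product_bound_general A B hA hB ψ hψ J₁ J₂ J₃ hJsym hsu2 hc12 hc13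
    hc23 j₁ j₂ j₃
end
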